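/- Let x ∈ (−2, −1), and set P₁ = (x, −√3·(x+1)), P₂ = (x+3, −√3·(x+2)), P₃ = (x+3, √3·x), P₄ = (x, √3·(x−1)); let n = (√3/2, 1/2) and n' = (√3/2, −1/2). Then: (i) the open vertical ray {(x, t) : t > −√3·(x+1)} is disjoint from K, and P₁ lies on the edge of T_UL joining (−2, √3) and (−1, 0); (ii) the reflection of (0, −1) in the wall with unit normal n is (√3/2, −1/2), the open segment from P₁ to P₂ is disjoint from K, and P₂ lies on the edge of T_UR joining (1, 0) and (2, −√3); (iii) the reflection of (√3/2, −1/2) in the wall with unit normal n is (0, −1), the open segment from P₂ to P₃ is disjoint from K, and P₃ lies on the edge of T_DR joining (1, −2√3) and (2, −√3); (iv) the reflection of (0, −1) in the wall with unit normal n' is (−√3/2, −1/2), the open segment from P₃ to P₄ is disjoint from K, and P₄ lies on the edge of T_DL joining (−2, −3√3) and (−1, −2√3); (v) the reflection of (−√3/2, −1/2) in the wall with unit normal n' is (0, −1), and the open ray {P₄ + t·(0, −1) : t > 0} is disjoint from K. Thus a particle entering vertically downward at abscissa x makes exactly four reflections and exits vertically downward at the same abscissa x: the doubled body is invisible in the direction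 (0, −1). -/
import Mathlib


open Real

/-- Upper-left triangle `T_UL = conv{(−2, −√3), (−2, √3), (−1, 0)}`. -/
noncomputable def TUL : Set (ℝ × ℝ) :=
  convexHull ℝ {((-2 : ℝ), -Real.sqrt 3), ((-2 : ℝ), Real.sqrt 3), ((-1 : ℝ), (0 : ℝ))}

/-- Upper-right triangle `T_UR = conv{(2, −√3), (2, √3), (1, 0)}`. -/
noncomputable def TUR : Set (ℝ × ℝ) :=
  convexHull ℝ {((2 : ℝ), -Real.sqrt 3), ((2 : ℝ), Real.sqrt 3), ((1 : ℝ), (0 : ℝ))}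

/-- Lower-left triangle `T_DL = conv{(−2, −√3), (−2, −3√3), (−1, −2√3)}`. -/
noncomputable def TDL : Set (ℝ × ℝ) :=
  convexHull ℝ
    {((-2 : ℝ), -Real.sqrt 3), ((-2 : ℝ), -3 * Real.sqrt 3), ((-1 : ℝ), -2 * Real.sqrt 3)}

/-- Lower-right triangle `T_DR = conv{(2, −√3), (2, −3√3), (1, −2√3)}`. -/
noncomputable def TDR : Set (ℝ × ℝ) :=
  convexHull ℝ
    {((2 : ℝ), -Real.sqrt 3), ((2 : ℝ), -3 * Real.sqrt 3), ((1 : ℝ), -2 * Real.sqrt 3)}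

/-- The central vertical cross-section of the invisible body, obtained by doubling the
zero-resistance body. -/
noncomputable def Kbody : Set (ℝ × ℝ) := TUL ∪ TUR ∪ TDL ∪ TDR

/-- The billiard reflection of a velocity `w ∈ ℝ²` in a wall with unit normal `n`:
`w − 2⟨w, n⟩n`. -/
def reflect (w n : ℝ × ℝ) : ℝ × ℝ :=
  w - (2 * (w.1 * n.1 + w.2 * n.2)) • n

lemma halfplane_convex (a₁ a₂ c : ℝ) : Convex ℝ {z : ℝ × ℝ | a₁ * z.1 + a₂ * z.2 ≤ c} :=
  convex_halfSpace_le
    ⟨fun u v => by simp; ring, fun s u => by simp [smul_eq_mul]; ring⟩ c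

lemma notMem_hull3 {p q r z : ℝ × ℝ} {a₁ a₂ c : ℝ}
    (hp : a₁ * p.1 + a₂ * p.2 ≤ c) (hq : a₁ * q.1 + a₂ * q.2 ≤ c)
    (hr : a₁ * r.1 + a₂ * r.2 ≤ c) (hz : c < a₁ * z.1 + a₂ * z.2) :
    z ∉ convexHull ℝ ({p, q, r} : Set (ℝ × ℝ)) := by
  intro hmem
  have hsub : convexHull ℝ ({p, q, r} : Set (ℝ × ℝ)) ⊆ {w : ℝ × ℝ | a₁ * w.1 + a₂ * w.2 ≤ c} := by
    apply convexHull_min _ (halfplane_convex a₁ a₂ c)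
    intro w hw
    rcases hw with h | h | h <;> subst h <;> assumption
  exact absurd (hsub hmem) (not_le.mpr hz)

lemma sqrt3_pos : (0 : ℝ) < Real.sqrt 3 := Real.sqrt_pos.mpr (by norm_num)

-- TUL ⊆ {√3 x + y ≤ -√3}
lemma notMem_TUL₁ {z : ℝ × ℝ} (h : -Real.sqrt 3 < Real.sqrt 3 * z.1 + z.2) : z ∉ TUL := by
  have hs := sqrt3_pos
  unfold TUL
  exact notMem_hull3 (a₁ := Real.sqrt 3) (a₂ := 1) (c := -Real.sqrt 3)
    (by simp; try nlinarith) (by simp; try nlinarith) (by simp; try nlinarith) (by simpa using h)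

-- TUL ⊆ {√3 x - y ≤ -√3}
lemma notMem_TUL₂ {z : ℝ × ℝ} (h : -Real.sqrt 3 < Real.sqrt 3 * z.1 - z.2) : z ∉ TUL := by
  have hs := sqrt3_pos
  unfold TUL
  exact notMem_hull3 (a₁ := Real.sqrt 3) (a₂ := -1) (c := -Real.sqrt 3)
    (by simp; try nlinarith) (by simp; try nlinarith) (by simp; try nlinarith) (by simp; try nlinarith)

-- TUL ⊆ {x ≤ -1}
lemma notMem_TUL₃ {z : ℝ × ℝ} (h : -1 < z.1) : z ∉ TUL := by
  unfold TUL
  exact notMem_hull3 (a₁ := 1) (a₂ := 0) (c := -1)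
    (by norm_num) (by norm_num) (by norm_num) (by simpa using h)

-- TUR ⊆ {-√3 x - y ≤ -√3}
lemma notMem_TUR₁ {z : ℝ × ℝ} (h : Real.sqrt 3 * z.1 + z.2 < Real.sqrt 3) : z ∉ TUR := by
  have hs := sqrt3_pos
  unfold TUR
  exact notMem_hull3 (a₁ := -Real.sqrt 3) (a₂ := -1) (c := -Real.sqrt 3)
    (by simp; try nlinarith) (by simp; try nlinarith) (by simp; try nlinarith) (by simp; try nlinarith)

-- TUR ⊆ {x ≥ 1}
lemma notMem_TUR₂ {z : ℝ × ℝ} (h : z.1 < 1) : z ∉ TUR := by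
  unfold TUR
  exact notMem_hull3 (a₁ := -1) (a₂ := 0) (c := -1)
    (by norm_num) (by norm_num) (by norm_num) (by simp; try linarith)

-- TDL ⊆ {√3 x + y ≤ -3√3}
lemma notMem_TDL₁ {z : ℝ × ℝ} (h : -3 * Real.sqrt 3 < Real.sqrt 3 * z.1 + z.2) : z ∉ TDL := by
  have hs := sqrt3_pos
  unfold TDL
  exact notMem_hull3 (a₁ := Real.sqrt 3) (a₂ := 1) (c := -3 * Real.sqrt 3)
    (by simp; try nlinarith) (by simp; try nlinarith) (by simp; try nlinarith) (by simpa using h)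

-- TDL ⊆ {-y + √3 x ≤ √3}, i.e. y - √3 x ≥ -√3
lemma notMem_TDL₂ {z : ℝ × ℝ} (h : z.2 - Real.sqrt 3 * z.1 < -Real.sqrt 3) : z ∉ TDL := by
  have hs := sqrt3_pos
  unfold TDL
  exact notMem_hull3 (a₁ := Real.sqrt 3) (a₂ := -1) (c := Real.sqrt 3)
    (by simp; try nlinarith) (by simp; try nlinarith) (by simp; try nlinarith) (by simp; try nlinarith)

-- TDL ⊆ {x ≤ -1}
lemma notMem_TDL₃ {z : ℝ × ℝ} (h : -1 < z.1) : z ∉ TDL := by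
  unfold TDL
  exact notMem_hull3 (a₁ := 1) (a₂ := 0) (c := -1)
    (by norm_num) (by norm_num) (by norm_num) (by simpa using h)

-- TDR ⊆ {y - √3 x ≤ -3√3}
lemma notMem_TDR₁ {z : ℝ × ℝ} (h : -3 * Real.sqrt 3 < z.2 - Real.sqrt 3 * z.1) : z ∉ TDR := by
  have hs := sqrt3_pos
  unfold TDR
  exact notMem_hull3 (a₁ := -Real.sqrt 3) (a₂ := 1) (c := -3 * Real.sqrt 3)
    (by simp; try nlinarith) (by simp; try nlinarith) (by simp; try nlinarith) (by simp; try nlinarith)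

-- TDR ⊆ {x ≥ 1}
lemma notMem_TDR₂ {z : ℝ × ℝ} (h : z.1 < 1) : z ∉ TDR := by
  unfold TDR
  exact notMem_hull3 (a₁ := -1) (a₂ := 0) (c := -1)
    (by norm_num) (by norm_num) (by norm_num) (by simp; try linarith)

lemma notMem_Kbody {z : ℝ × ℝ} (h1 : z ∉ TUL) (h2 : z ∉ TUR) (h3 : z ∉ TDL) (h4 : z ∉ TDR) :
    z ∉ Kbody := by
  simp only [Kbody, Set.mem_union, not_or]
  exact ⟨⟨⟨h1, h2⟩, h3⟩, h4⟩

/-- A particle of the vertical flow entering at abscissa `x ∈ (−2, −1)` makes exactly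
four reflections from the doubled body, at `P₁, P₂, P₃, P₄`, and exits vertically
downward at the same abscissa `x`: the doubled body is invisible in direction `(0, −1)`. -/
theorem four_reflections_invisible (x : ℝ) (hx : x ∈ Set.Ioo (-2 : ℝ) (-1)) :
    let P₁ : ℝ × ℝ := (x, -Real.sqrt 3 * (x + 1))
    let P₂ : ℝ × ℝ := (x + 3, -Real.sqrt 3 * (x + 2))
    let P₃ : ℝ × ℝ := (x + 3, Real.sqrt 3 * x)
    let P₄ : ℝ × ℝ := (x, Real.sqrt 3 * (x - 1))
    let n : ℝ × ℝ := (Real.sqrt 3 / 2, 1 / 2)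
    let n' : ℝ × ℝ := (Real.sqrt 3 / 2, -(1 / 2))
    -- (i)
    ((∀ t : ℝ, -Real.sqrt 3 * (x + 1) < t → ((x, t) : ℝ × ℝ) ∉ Kbody) ∧
      P₁ ∈ segment ℝ ((-2 : ℝ), Real.sqrt 3) ((-1 : ℝ), (0 : ℝ))) ∧
    -- (ii)
    (reflect ((0 : ℝ), (-1 : ℝ)) n = (Real.sqrt 3 / 2, -(1 / 2)) ∧
      openSegment ℝ P₁ P₂ ∩ Kbody = ∅ ∧
      P₂ ∈ segment ℝ ((1 : ℝ), (0 : ℝ)) ((2 : ℝ), -Real.sqrt 3)) ∧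
    -- (iii)
    (reflect (Real.sqrt 3 / 2, -(1 / 2)) n = ((0 : ℝ), (-1 : ℝ)) ∧
      openSegment ℝ P₂ P₃ ∩ Kbody = ∅ ∧
      P₃ ∈ segment ℝ ((1 : ℝ), -2 * Real.sqrt 3) ((2 : ℝ), -Real.sqrt 3)) ∧
    -- (iv)
    (reflect ((0 : ℝ), (-1 : ℝ)) n' = (-(Real.sqrt 3 / 2), -(1 / 2)) ∧
      openSegment ℝ P₃ P₄ ∩ Kbody = ∅ ∧
      P₄ ∈ segment ℝ ((-2 : ℝ), -3 * Real.sqrt 3) ((-1 : ℝ), -2 * Real.sqrt 3)) ∧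
    -- (v)
    (reflect (-(Real.sqrt 3 / 2), -(1 / 2)) n' = ((0 : ℝ), (-1 : ℝ)) ∧
      ∀ t : ℝ, 0 < t → P₄ + t • (((0 : ℝ), (-1 : ℝ)) : ℝ × ℝ) ∉ Kbody) := by
  obtain ⟨hx1, hx2⟩ := hx
  have hs := sqrt3_pos
  have h3 : Real.sqrt 3 ^ 2 = 3 := Real.sq_sqrt (by norm_num)
  intro P₁ P₂ P₃ P₄ n n'
  refine ⟨⟨?_, ?_⟩, ⟨?_, ?_, ?_⟩, ⟨?_, ?_, ?_⟩, ⟨?_, ?_, ?_⟩, ⟨?_, ?_⟩⟩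
  -- (i) ray
  · intro t ht
    exact notMem_Kbody (notMem_TUL₁ (by simp; try nlinarith)) (notMem_TUR₂ (by simp; try linarith))
      (notMem_TDL₁ (by simp; try nlinarith)) (notMem_TDR₂ (by simp; try linarith))
  -- (i) P₁ on edge
  · exact ⟨-(x + 1), x + 2, by linarith, by linarith, by ring,
      by simp [P₁, Prod.ext_iff]; constructor <;> ring⟩
  -- (ii) reflection
  · simp only [reflect, n, Prod.ext_iff, Prod.smul_fst, Prod.smul_snd, Prod.fst_sub,
      Prod.snd_sub, smul_eq_mul]
    constructor <;> ring
  -- (ii) open segment disjoint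
  · rw [Set.eq_empty_iff_forall_notMem]
    rintro z ⟨⟨a, b, ha, hb, hab, rfl⟩, hK⟩
    revert hK
    refine notMem_Kbody (notMem_TUL₁ ?_) (notMem_TUR₁ ?_) (notMem_TDL₁ ?_)
      (notMem_TDR₁ ?_) <;>
    · simp only [P₁, P₂, Prod.fst_add, Prod.snd_add, Prod.smul_fst, Prod.smul_snd,
        smul_eq_mul]
      nlinarith [mul_pos hs ha, mul_pos hs hb, mul_pos hs (mul_pos ha hb),
        mul_pos (mul_pos hs ha) (by linarith : (0:ℝ) < -1 - x),
        mul_pos (mul_pos hs hb) (by linarith : (0:ℝ) < -1 - x)]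
  -- (ii) P₂ on edge
  · exact ⟨-(x + 1), x + 2, by linarith, by linarith, by ring,
      by simp [P₂, Prod.ext_iff]; constructor <;> ring⟩
  -- (iii) reflection
  · simp only [reflect, n, Prod.ext_iff, Prod.smul_fst, Prod.smul_snd, Prod.fst_sub,
      Prod.snd_sub, smul_eq_mul]
    constructor <;> nlinarith
  -- (iii) open segment disjoint
  · rw [Set.eq_empty_iff_forall_notMem]
    rintro z ⟨⟨a, b, ha, hb, hab, rfl⟩, hK⟩
    revert hK
    refine notMem_Kbody (notMem_TUL₃ ?_) (notMem_TUR₁ ?_) (notMem_TDL₃ ?_)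
      (notMem_TDR₁ ?_) <;>
    · simp only [P₂, P₃, Prod.fst_add, Prod.snd_add, Prod.smul_fst, Prod.smul_snd,
        smul_eq_mul]
      nlinarith [mul_pos hs ha, mul_pos hs hb,
        mul_pos (mul_pos hs ha) (by linarith : (0:ℝ) < -1 - x),
        mul_pos (mul_pos hs hb) (by linarith : (0:ℝ) < -1 - x)]
  -- (iii) P₃ on edge
  · exact ⟨-(x + 1), x + 2, by linarith, by linarith, by ring,
      by simp [P₃, Prod.ext_iff]; constructor <;> ring⟩
  -- (iv) reflection
  · simp only [reflect, n', Prod.ext_iff, Prod.smul_fst, Prod.smul_snd, Prod.fst_sub,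
      Prod.snd_sub, smul_eq_mul]
    constructor <;> ring
  -- (iv) open segment disjoint
  · rw [Set.eq_empty_iff_forall_notMem]
    rintro z ⟨⟨a, b, ha, hb, hab, rfl⟩, hK⟩
    revert hK
    refine notMem_Kbody (notMem_TUL₂ ?_) (notMem_TUR₁ ?_) (notMem_TDL₂ ?_)
      (notMem_TDR₁ ?_) <;>
    · simp only [P₃, P₄, Prod.fst_add, Prod.snd_add, Prod.smul_fst, Prod.smul_snd,
        smul_eq_mul]
      nlinarith [mul_pos hs ha, mul_pos hs hb,
        mul_pos (mul_pos hs ha) (by linarith : (0:ℝ) < -1 - x),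
        mul_pos (mul_pos hs hb) (by linarith : (0:ℝ) < -1 - x)]
  -- (iv) P₄ on edge
  · exact ⟨-(x + 1), x + 2, by linarith, by linarith, by ring,
      by simp [P₄, Prod.ext_iff]; constructor <;> ring⟩
  -- (v) reflection
  · simp only [reflect, n', Prod.ext_iff, Prod.smul_fst, Prod.smul_snd, Prod.fst_sub,
      Prod.snd_sub, smul_eq_mul]
    constructor <;> nlinarith
  -- (v) exit ray
  · intro t ht
    refine notMem_Kbody (notMem_TUL₂ ?_) (notMem_TUR₂ ?_) (notMem_TDL₂ ?_)
      (notMem_TDR₂ ?_) <;>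
    · simp only [P₄, Prod.fst_add, Prod.snd_add, Prod.smul_fst, Prod.smul_snd, smul_eq_mul]
      nlinarith [mul_pos hs ht]
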